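/- Define P_n(σ) = (1/√π)∫_{−∞}^{∞} (ρ−σ)(ρ+σ) H_n(ρ−σ) H_n(ρ+σ) e^{−ρ²} dρ, where H_n is the n-th physicists' Hermite polynomial. Then P_n is a polynomial in σ of degree 2n+2 containing only even powers of σ. -/

import Mathlib

open Polynomial MeasureTheory Real

/-!
With `g = X * Hₙ`, the integrand of `Pₙ(σ)` is `g(ρ - σ) g(ρ + σ) e^{-ρ²}`, a polynomial in `σ`
whose coefficients are polynomials in `ρ`, so integrating coefficientwise gives a polynomial in `σ`.
Its coefficient of `σ^(2n+2)` does not depend on `ρ`: it is `(-1)^(n+1) 4^n`, which the Gaussian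
integral multiplies by `√π`, so the degree is exactly `2n + 2`. Replacing `σ` by `-σ` swaps the two
factors of the integrand, so `Pₙ` is even and its odd coefficients vanish.
-/

/-- The physicists' Hermite polynomials. -/
noncomputable def physHermite : ℕ → Polynomial ℝ
  | 0 => 1
  | 1 => 2 * Polynomial.X
  | n + 2 => 2 * Polynomial.X * physHermite (n + 1)
      - Polynomial.C (2 * ((n : ℝ) + 1)) * physHermite n

/-- The mixing integral
`Pₙ(σ) = (1/√π) ∫ (ρ-σ)(ρ+σ) Hₙ(ρ-σ) Hₙ(ρ+σ) e^{-ρ²} dρ`. -/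
noncomputable def Pmix (n : ℕ) (σ : ℝ) : ℝ :=
  (1 / Real.sqrt π) * ∫ ρ : ℝ, (ρ - σ) * (ρ + σ) * (physHermite n).eval (ρ - σ)
    * (physHermite n).eval (ρ + σ) * Real.exp (-ρ ^ 2)

theorem natDegree_and_leadingCoeff_physHermite (n : ℕ) :
    (physHermite n).natDegree = n ∧ (physHermite n).leadingCoeff = 2 ^ n := by
  induction n using physHermite.induct with
  | case1 => simp [physHermite]
  | case2 =>
    rw [physHermite, ← C_ofNat, natDegree_C_mul_X _ two_ne_zero, leadingCoeff_C_mul_X]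
    simp
  | case3 m ih₁ ih₀ =>
    have hlead : (2 * X * physHermite (m + 1)).natDegree = m + 2 ∧
        (2 * X * physHermite (m + 1)).leadingCoeff = 2 ^ (m + 2) := by
      have hne : physHermite (m + 1) ≠ 0 := leadingCoeff_ne_zero.mp (by simp [ih₁.2])
      rw [← C_ofNat, mul_assoc, natDegree_C_mul two_ne_zero, natDegree_X_mul hne, ih₁.1,
        leadingCoeff_mul, leadingCoeff_mul, leadingCoeff_X, ih₁.2, leadingCoeff_C]
      exact ⟨rfl, by ring⟩
    have hlow : (C (2 * ((m : ℝ) + 1)) * physHermite m).natDegree < m + 2 :=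
      (natDegree_C_mul_le _ _).trans_lt (by omega)
    rw [physHermite, natDegree_sub_eq_left_of_natDegree_lt (hlead.1 ▸ hlow),
      leadingCoeff_sub_of_degree_lt (degree_lt_degree (hlead.1 ▸ hlow))]
    exact hlead

theorem coeff_eq_zero_of_odd_of_eval_neg {R : Type*} [CommRing R] [IsDomain R] [CharZero R]
    {p : R[X]} (hp : ∀ x, p.eval (-x) = p.eval x) {k : ℕ} (hk : Odd k) : p.coeff k = 0 := by
  have hcomp : p.comp (C (-1) * X) = p :=
    Polynomial.funext fun x => by simpa using hp x
  have := congrArg (coeff · k) hcomp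
  simp only [comp_C_mul_X_coeff, hk.neg_one_pow, mul_neg_one] at this
  exact CharZero.eq_neg_self_iff.mp this.symm

theorem integrable_eval_mul_exp_neg_sq (q : ℝ[X]) :
    Integrable fun x => q.eval x * exp (-x ^ 2) := by
  simp_rw [eval_eq_sum_range, Finset.sum_mul, mul_assoc]
  refine integrable_finsetSum _ fun k _ => Integrable.const_mul ?_ _
  simpa [neg_one_mul] using
    integrable_rpow_mul_exp_neg_mul_sq one_pos (s := k) (by linarith [k.cast_nonneg (α := ℝ)])

section IntegralCoeffs

variable (Q : ℝ[X][X]) (w : ℝ → ℝ)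

/-- `Q` is read as a polynomial in `σ` (the outer variable) with coefficients in `ℝ[ρ]`; each
coefficient is integrated against the weight `w`. -/
noncomputable def integralCoeffs : ℝ[X] :=
  ∑ k ∈ Finset.range (Q.natDegree + 1), monomial k (∫ ρ, (Q.coeff k).eval ρ * w ρ)

theorem coeff_integralCoeffs (k : ℕ) :
    (integralCoeffs Q w).coeff k = ∫ ρ, (Q.coeff k).eval ρ * w ρ := by
  simp only [integralCoeffs, finsetSum_coeff, coeff_monomial, Finset.sum_ite_eq',
    Finset.mem_range]
  split_ifs with hk
  · rfl
  · simp [coeff_eq_zero_of_natDegree_lt (by omega : Q.natDegree < k)]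

theorem natDegree_integralCoeffs (hQ : ∫ ρ, Q.leadingCoeff.eval ρ * w ρ ≠ 0) :
    (integralCoeffs Q w).natDegree = Q.natDegree := by
  refine le_antisymm (natDegree_le_iff_coeff_eq_zero.mpr fun k hk => ?_)
    (le_natDegree_of_ne_zero (by rwa [coeff_integralCoeffs]))
  simp [coeff_integralCoeffs, coeff_eq_zero_of_natDegree_lt (by exact_mod_cast hk)]

theorem eval_integralCoeffs (hw : ∀ q : ℝ[X], Integrable fun ρ => q.eval ρ * w ρ) (σ : ℝ) :
    (integralCoeffs Q w).eval σ = ∫ ρ, Q.evalEval ρ σ * w ρ := by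
  have hexpand : ∀ ρ, Q.evalEval ρ σ * w ρ =
      ∑ k ∈ Finset.range (Q.natDegree + 1), σ ^ k * ((Q.coeff k).eval ρ * w ρ) := by
    intro ρ
    simp only [evalEval, eval_eq_sum_range (C σ), eval_finsetSum, eval_mul, eval_pow, eval_C,
      Finset.sum_mul]
    exact Finset.sum_congr rfl fun k _ => by ring
  simp_rw [hexpand, integral_finsetSum _ fun k _ => (hw _).const_mul _, integral_const_mul,
    integralCoeffs, eval_finsetSum, eval_monomial, mul_comm]

end IntegralCoeffs

section ShiftProduct

@[simp]
theorem natDegree_C_sub_X {R : Type*} [Ring R] [Nontrivial R] (a : R) :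
    (C a - X).natDegree = 1 := by
  rw [← neg_sub, natDegree_neg, natDegree_X_sub_C]

theorem leadingCoeff_C_sub_X {R : Type*} [Ring R] [Nontrivial R] (a : R) :
    (C a - X).leadingCoeff = -1 := by
  rw [← neg_sub, leadingCoeff_neg, leadingCoeff_X_sub_C]

@[simp]
theorem natDegree_C_add_X {R : Type*} [Semiring R] [Nontrivial R] (a : R) :
    (C a + X).natDegree = 1 := by
  rw [add_comm, natDegree_X_add_C]

theorem leadingCoeff_C_add_X {R : Type*} [Semiring R] (a : R) : (C a + X).leadingCoeff = 1 := by
  rw [add_comm, leadingCoeff_X_add_C]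

variable {K : Type*} [Field K] (f g : K[X])

noncomputable def shiftProduct : K[X][X] :=
  (f.map C).comp (C X - X) * (g.map C).comp (C X + X)

theorem evalEval_shiftProduct (ρ σ : K) :
    (shiftProduct f g).evalEval ρ σ = f.eval (ρ - σ) * g.eval (ρ + σ) := by
  have hcomp (p q : K[X]) : eval₂ C q p = p.comp q := rfl
  simp [shiftProduct, evalEval, eval_map, hcomp]

theorem leadingCoeff_shiftProduct :
    (shiftProduct f g).leadingCoeff =
      C ((-1) ^ f.natDegree * f.leadingCoeff * g.leadingCoeff) := by
  rw [shiftProduct, leadingCoeff_mul, leadingCoeff_comp (by simp), leadingCoeff_comp (by simp),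
    leadingCoeff_map, leadingCoeff_map, natDegree_map, leadingCoeff_C_sub_X, leadingCoeff_C_add_X]
  simp only [map_mul, map_pow, map_neg, map_one, one_pow]
  ring

theorem natDegree_shiftProduct (hf : f ≠ 0) (hg : g ≠ 0) :
    (shiftProduct f g).natDegree = f.natDegree + g.natDegree := by
  have hlead : (shiftProduct f g).leadingCoeff ≠ 0 := by
    simp [leadingCoeff_shiftProduct, hf, hg]
  rw [shiftProduct, leadingCoeff_mul] at hlead
  rw [shiftProduct, natDegree_mul' hlead, natDegree_comp, natDegree_comp, natDegree_map,
    natDegree_map, natDegree_C_sub_X, natDegree_C_add_X, mul_one, mul_one]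

end ShiftProduct

theorem integral_exp_neg_sq : ∫ x : ℝ, exp (-x ^ 2) = √π := by
  simpa using integral_gaussian 1

theorem Pmix_eq_integral_shiftProduct (n : ℕ) (σ : ℝ) :
    Pmix n σ = (√π)⁻¹ * ∫ ρ, (shiftProduct (X * physHermite n) (X * physHermite n)).evalEval ρ σ
      * exp (-ρ ^ 2) := by
  simp only [Pmix, evalEval_shiftProduct, eval_mul, eval_X, one_div]
  congr 2 with ρ
  ring

theorem Pmix_neg (n : ℕ) (σ : ℝ) : Pmix n (-σ) = Pmix n σ := by
  simp only [Pmix, sub_neg_eq_add, ← sub_eq_add_neg]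
  congr 2 with ρ
  ring

/-- `Pₙ` is a polynomial in `σ` of degree `2n+2` containing only even powers. -/
theorem Pmix_even_polynomial (n : ℕ) :
    ∃ p : Polynomial ℝ, p.natDegree = 2 * n + 2 ∧ (∀ k, Odd k → p.coeff k = 0) ∧
      ∀ σ : ℝ, Pmix n σ = p.eval σ := by
  obtain ⟨hdeg, hlead⟩ := natDegree_and_leadingCoeff_physHermite n
  have hH : physHermite n ≠ 0 := leadingCoeff_ne_zero.mp (by simp [hlead])
  have hg : X * physHermite n ≠ 0 := mul_ne_zero X_ne_zero hH
  set Q := shiftProduct (X * physHermite n) (X * physHermite n)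
  set p := (√π)⁻¹ • integralCoeffs Q fun ρ => exp (-ρ ^ 2)
  have hPmix (σ : ℝ) : Pmix n σ = p.eval σ := by
    rw [Pmix_eq_integral_shiftProduct, eval_smul, smul_eq_mul,
      eval_integralCoeffs _ _ integrable_eval_mul_exp_neg_sq]
  have hsqrt : √π ≠ 0 := (sqrt_pos.mpr pi_pos).ne'
  have htop : ∫ ρ, Q.leadingCoeff.eval ρ * exp (-ρ ^ 2) ≠ 0 := by
    simp [Q, leadingCoeff_shiftProduct, integral_const_mul, integral_exp_neg_sq, hH, hsqrt]
  refine ⟨p, ?_, fun k hk => coeff_eq_zero_of_odd_of_eval_neg (fun σ => ?_) hk, hPmix⟩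
  · rw [natDegree_smul _ (inv_ne_zero hsqrt), natDegree_integralCoeffs _ _ htop,
      natDegree_shiftProduct _ _ hg hg, natDegree_X_mul hH, hdeg]
    ring
  · rw [← hPmix, ← hPmix, Pmix_neg]
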